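/- arXiv:1701.05318 — 6 statements merged into one kernel-verified Lean document; each statement's English description precedes it below -/
import Mathlib

section
/- Let ψ : ℝ → ℝ be a C^∞ function with ψ(0) = 0 such that ψ(y) = sin(7π/5) for every y ∈ [7π/15, 8π/15], and let α ∈ ℝ. Define φ : ℝ → ℝ by φ(x) = α·sin(3x) − (1/3)·∫₀ˣ sin(3(x−y))·ψ′(y) dy. Then for every x ∈ [7π/15, 8π/15], φ(x) = (α − (1/3)·cos(7π/5)·sin(7π/5) − ∫₀^{7π/15} sin(3y)·ψ(y) dy)·sin(3x) + ((1/3)·sin(7π/5)² − ∫₀^{7π/15} cos(3y)·ψ(y) dy)·cos(3x). -/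
open Real

/-- The variation-of-constants solution
`φ(x) = α·sin(3x) − (1/3)·∫₀ˣ sin(3(x−y))·ψ′(y) dy`. -/
noncomputable def phiSol (ψ : ℝ → ℝ) (α : ℝ) : ℝ → ℝ :=
  fun x => α * Real.sin (3 * x)
    - (1 / 3) * ∫ y in (0:ℝ)..x, Real.sin (3 * (x - y)) * deriv ψ y

/-!
Integrating by parts moves the derivative off `ψ`:
`φ(x) = (α + ψ(0)/3)·sin(3x) − ∫₀ˣ cos(3(x−y))·ψ(y) dy`.
Split this integral at `a = 7π/15`. On `[a, x]` the function `ψ` is the constant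
`c = sin(7π/5)`, so that piece is `c·sin(3(x−a))/3`, and expanding `cos(3(x−y))` and
`sin(3x − 3a)` by the addition formulas (with `3a = 7π/5`, so `sin(3a) = c`) gives the claim.
-/

open intervalIntegral Set
open MeasureTheory (volume)

theorem hasDerivAt_sin_mul_sub (k x y : ℝ) :
    HasDerivAt (fun y => sin (k * (x - y))) (-(k * cos (k * (x - y)))) y := by
  convert (((hasDerivAt_id' y).const_sub x).const_mul k).sin using 1
  ring

section

variable {a b x k : ℝ}

theorem integral_sin_mul_sub_mul_deriv {ψ ψ' : ℝ → ℝ}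
    (hψ : ∀ y ∈ uIcc a x, HasDerivAt ψ (ψ' y) y) (hψ' : IntervalIntegrable ψ' volume a x) :
    ∫ y in a..x, sin (k * (x - y)) * ψ' y
      = k * (∫ y in a..x, cos (k * (x - y)) * ψ y) - sin (k * (x - a)) * ψ a := by
  rw [integral_mul_deriv_eq_deriv_mul (fun y _ => hasDerivAt_sin_mul_sub k x y) hψ
    (by apply Continuous.intervalIntegrable; fun_prop) hψ']
  simp only [sub_self, mul_zero, sin_zero, zero_mul, neg_mul, integral_neg, mul_assoc,
    integral_const_mul]
  ring

theorem integral_cos_mul_sub (hk : k ≠ 0) :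
    ∫ y in a..x, cos (k * (x - y)) = sin (k * (x - a)) / k := by
  have h : ∀ y ∈ uIcc a x,
      HasDerivAt (fun y => -sin (k * (x - y)) / k) (cos (k * (x - y))) y := fun y _ => by
    simpa only [Pi.neg_apply, neg_neg, mul_div_cancel_left₀ _ hk] using
      (hasDerivAt_sin_mul_sub k x y).neg.div_const k
  rw [integral_eq_sub_of_hasDerivAt h (by apply Continuous.intervalIntegrable; fun_prop)]
  simp only [sub_self, mul_zero, sin_zero]
  ring

theorem integral_cos_mul_sub_mul {f : ℝ → ℝ} (hf : IntervalIntegrable f volume a b) :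
    ∫ y in a..b, cos (k * (x - y)) * f y
      = cos (k * x) * (∫ y in a..b, cos (k * y) * f y)
        + sin (k * x) * ∫ y in a..b, sin (k * y) * f y := by
  have hcos : IntervalIntegrable (fun y => cos (k * y) * f y) volume a b :=
    hf.continuousOn_mul (by fun_prop)
  have hsin : IntervalIntegrable (fun y => sin (k * y) * f y) volume a b :=
    hf.continuousOn_mul (by fun_prop)
  rw [← integral_const_mul, ← integral_const_mul, ← integral_add (hcos.const_mul _)
    (hsin.const_mul _)]
  refine integral_congr fun y _ => ?_
  simp only [mul_sub, cos_sub]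
  ring

end

theorem phiSol_eq_sub_integral_cos {ψ : ℝ → ℝ} (hψ : ContDiff ℝ 1 ψ) (α x : ℝ) :
    phiSol ψ α x
      = (α + ψ 0 / 3) * sin (3 * x) - ∫ y in (0:ℝ)..x, cos (3 * (x - y)) * ψ y := by
  rw [phiSol, integral_sin_mul_sub_mul_deriv (ψ := ψ)
    (fun y _ => (hψ.differentiable one_ne_zero y).hasDerivAt)
    ((hψ.continuous_deriv le_rfl).intervalIntegrable _ _)]
  simp only [sub_zero]
  ring

theorem stmt_2 (ψ : ℝ → ℝ) (hψ : ContDiff ℝ (⊤ : ℕ∞) ψ) (hψ0 : ψ 0 = 0)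
    (hconst : ∀ y ∈ Set.Icc (7 * π / 15) (8 * π / 15), ψ y = Real.sin (7 * π / 5))
    (α : ℝ) :
    ∀ x ∈ Set.Icc (7 * π / 15) (8 * π / 15),
      phiSol ψ α x
        = (α - (1 / 3) * Real.cos (7 * π / 5) * Real.sin (7 * π / 5)
              - ∫ y in (0:ℝ)..(7 * π / 15), Real.sin (3 * y) * ψ y) * Real.sin (3 * x)
          + ((1 / 3) * Real.sin (7 * π / 5) ^ 2
              - ∫ y in (0:ℝ)..(7 * π / 15), Real.cos (3 * y) * ψ y) * Real.cos (3 * x) := by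
  intro x hx
  set a := 7 * π / 15
  set c := sin (7 * π / 5)
  have hψ1 : ContDiff ℝ 1 ψ := hψ.of_le (by exact_mod_cast le_top)
  have hψc : Continuous ψ := hψ1.continuous
  have hint : ∀ u v, IntervalIntegrable (fun y => cos (3 * (x - y)) * ψ y) volume u v :=
    fun _ _ => (by fun_prop : Continuous _).intervalIntegrable _ _
  have hsplit := integral_add_adjacent_intervals (hint 0 a) (hint a x)
  have htail : ∫ y in a..x, cos (3 * (x - y)) * ψ y = c * sin (3 * (x - a)) / 3 := by
    have huIcc : uIcc a x ⊆ Icc a (8 * π / 15) := by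
      rw [uIcc_of_le hx.1]; exact Icc_subset_Icc le_rfl hx.2
    rw [integral_congr fun y hy => by rw [hconst y (huIcc hy)], integral_mul_const,
      integral_cos_mul_sub three_ne_zero]
    ring
  have h3a : 3 * a = 7 * π / 5 := by ring
  have hhead := integral_cos_mul_sub_mul (k := 3) (x := x) (hψc.intervalIntegrable 0 a)
  have hshift : sin (3 * (x - a)) = sin (3 * x) * cos (7 * π / 5) - cos (3 * x) * c := by
    rw [mul_sub, sin_sub, h3a]
  rw [phiSol_eq_sub_integral_cos hψ1, ← hsplit, htail, hhead, hψ0, hshift]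
  ring
end

section
/- Let ψ : ℝ → ℝ be a C^∞ function and let V ⊂ ℝ be an open set containing every zero of ψ in [0, π], such that ψ(x) = sin(3x) for every x ∈ V ∩ [0, π]. Then there exists a C^∞ function a : ℝ → ℝ such that −ψ″(x) − a(x)·ψ(x) = 9·ψ(x) for every x ∈ [0, π], and moreover a(x) = 0 for every x ∈ V ∩ [0, π]. -/
/-!
Away from `V` the equation `-ψ'' - a ψ = 9 ψ` forces `a = (-ψ'' - 9ψ) / ψ`, while on `V`, where
`ψ = sin (3x)`, the numerator `-ψ'' - 9ψ` already vanishes. The compact set `[0, π] \ V` avoids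
the zeros of `ψ`, so a smooth cutoff that is `1` there and vanishes near the zeros of `ψ`, divided
by `ψ`, is a smooth function `g` with `g = 1/ψ` on `[0, π] \ V`; then `a := (-ψ'' - 9ψ) g` works
on all of `[0, π]`.
-/

open Real Set
open scoped Manifold

theorem eqOn_deriv_of_eqOn_inter {𝕜 F : Type*} [NontriviallyNormedField 𝕜]
    [NormedAddCommGroup F] [NormedSpace 𝕜 F] {f g : 𝕜 → F} {s V : Set 𝕜}
    (hs : UniqueDiffOn 𝕜 s) (hV : IsOpen V) (hf : Differentiable 𝕜 f)
    (hg : Differentiable 𝕜 g) (h : EqOn f g (V ∩ s)) :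
    EqOn (deriv f) (deriv g) (V ∩ s) := by
  intro x hx
  have hu : UniqueDiffWithinAt 𝕜 (V ∩ s) x := (inter_comm s V ▸ hs.inter hV) x hx
  rw [← (hf x).derivWithin hu, ← (hg x).derivWithin hu, derivWithin_congr h (h hx)]

theorem deriv_deriv_sin_mul (c : ℝ) :
    deriv (deriv fun x => sin (c * x)) = fun x => -(c ^ 2 * sin (c * x)) := by
  have h1 (x : ℝ) : HasDerivAt (fun x => sin (c * x)) (c * cos (c * x)) x :=
    (((hasDerivAt_id' x).const_mul c).sin).congr_deriv (by ring)
  have h2 (x : ℝ) : HasDerivAt (fun x => c * cos (c * x)) (-(c ^ 2 * sin (c * x))) x :=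
    ((((hasDerivAt_id' x).const_mul c).cos).const_mul c).congr_deriv (by ring)
  rw [funext fun x => (h1 x).deriv]
  exact funext fun x => (h2 x).deriv

theorem exists_contDiff_eqOn_inv {E : Type*} [NormedAddCommGroup E] [NormedSpace ℝ E]
    [FiniteDimensional ℝ E] {n : ℕ∞} {ψ : E → ℝ} (hψ : ContDiff ℝ n ψ) {K : Set E}
    (hK : IsClosed K) (hne : ∀ x ∈ K, ψ x ≠ 0) :
    ∃ g : E → ℝ, ContDiff ℝ n g ∧ EqOn g (fun x => (ψ x)⁻¹) K := by
  have hZ : IsClosed {x | ψ x = 0} := isClosed_eq hψ.continuous continuous_const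
  obtain ⟨f, hf0, hf1, -⟩ := exists_contMDiffMap_zero_one_nhds_of_isClosed 𝓘(ℝ, E) (n := n) hZ hK
    (disjoint_left.2 fun x hx hxK => hne x hxK hx)
  have hf : ContDiff ℝ n f := contMDiff_iff_contDiff.1 f.contMDiff
  refine ⟨fun x => f x / ψ x, contDiff_iff_contDiffAt.2 fun x => ?_, fun x hx => ?_⟩
  · by_cases hx : ψ x = 0
    · -- `f` vanishes near the zeros of `ψ`, hence so does the quotient
      refine contDiffAt_const (c := (0 : ℝ)).congr_of_eventuallyEq ?_
      filter_upwards [hf0.filter_mono (nhds_le_nhdsSet (s := {x | ψ x = 0}) hx)] with y hy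
      simp [hy]
    · exact hf.contDiffAt.div hψ.contDiffAt hx
  · simp [hf1.self_of_nhdsSet x hx]

theorem stmt_7 (ψ : ℝ → ℝ) (hψ : ContDiff ℝ (⊤ : ℕ∞) ψ)
    (V : Set ℝ) (hV : IsOpen V)
    (hzeros : ∀ x ∈ Set.Icc (0:ℝ) π, ψ x = 0 → x ∈ V)
    (hsin : ∀ x ∈ V ∩ Set.Icc (0:ℝ) π, ψ x = Real.sin (3 * x)) :
    ∃ a : ℝ → ℝ, ContDiff ℝ (⊤ : ℕ∞) a ∧
      (∀ x ∈ Set.Icc (0:ℝ) π, -(deriv (deriv ψ) x) - a x * ψ x = 9 * ψ x) ∧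
      (∀ x ∈ V ∩ Set.Icc (0:ℝ) π, a x = 0) := by
  have hψ' : ContDiff ℝ (⊤ : ℕ∞) (deriv ψ) := (contDiff_infty_iff_deriv.1 hψ).2
  have hψ'' : ContDiff ℝ (⊤ : ℕ∞) (deriv (deriv ψ)) := (contDiff_infty_iff_deriv.1 hψ').2
  have hIcc : UniqueDiffOn ℝ (Icc 0 π) := uniqueDiffOn_Icc pi_pos
  have hsin_smooth : ContDiff ℝ (⊤ : ℕ∞) fun x => sin (3 * x) := by fun_prop
  have hψ'_eq : EqOn (deriv ψ) (deriv fun x => sin (3 * x)) (V ∩ Icc 0 π) :=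
    eqOn_deriv_of_eqOn_inter hIcc hV (hψ.differentiable (by simp))
      (hsin_smooth.differentiable (by simp)) hsin
  have hψ''_eq : EqOn (deriv (deriv ψ)) (deriv (deriv fun x => sin (3 * x))) (V ∩ Icc 0 π) :=
    eqOn_deriv_of_eqOn_inter hIcc hV (hψ'.differentiable (by simp))
      ((contDiff_infty_iff_deriv.1 hsin_smooth).2.differentiable (by simp)) hψ'_eq
  have hkernel : ∀ x ∈ V ∩ Icc 0 π, -deriv (deriv ψ) x - 9 * ψ x = 0 := by
    intro x hx
    rw [hψ''_eq hx, deriv_deriv_sin_mul, hsin x hx]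
    ring
  obtain ⟨g, hg, hgψ⟩ := exists_contDiff_eqOn_inv hψ (isClosed_Icc.sdiff hV)
    fun x hx hψx => hx.2 (hzeros x hx.1 hψx)
  refine ⟨fun x => (-deriv (deriv ψ) x - 9 * ψ x) * g x,
    (hψ''.neg.sub (contDiff_const.mul hψ)).mul hg, fun x hx => ?_,
    fun x hx => by simp [hkernel x hx]⟩
  by_cases hxV : x ∈ V
  · have h0 := hkernel x ⟨hxV, hx⟩
    simp only [h0, zero_mul]
    linarith
  · have hψx : ψ x ≠ 0 := fun h0 => hxV (hzeros x hx h0)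
    simp only [hgψ ⟨hx, hxV⟩]
    field_simp
    ring
end

section
/- There exist C^∞ functions φ, ψ, a : ℝ → ℝ such that: (i) −φ″(x) − ψ′(x) = 9·φ(x) for every x ∈ [0, π]; (ii) −ψ″(x) − a(x)·ψ(x) = 9·ψ(x) for every x ∈ [0, π]; (iii) φ(0) = φ(π) = ψ(0) = ψ(π) = 0; (iv) φ(x) = 0 for every x ∈ [7π/15, 8π/15]; (v) ψ is not identically zero on [0, π] and φ is not identically zero on [0, π]. -/
/-!
`ψ` is built positive on `(0, π)`, equal to `sin` near `0` and `π`, symmetric about `π / 2` and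
equal to `1` near `ω`. Since `ψ'' + ψ` vanishes near the endpoints, `a = -9 - ψ''/ψ`, written as
`-8 - (ψ'' + ψ)/ψ`, is smooth, and the second equation holds by construction.

`φ` is the solution of `φ'' + 9 φ = -ψ'` with zero Cauchy data at `7π/15` (variation of constants).
It vanishes on `ω` because `ψ'` does there. As `sin 3x` vanishes at `0` and `π`, the boundary
conditions reduce to `∫ sin (3t) ψ'(t) dt = 0` over `[0, 7π/15]` and over `[7π/15, π]`, and the
symmetry of `ψ` turns the second into the first. This single linear condition is met by adding
to `basePsi = (1 - θ) sin + θ`, with `θ` a plateau around `ω`, a multiple `corrCoeff` of a bump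
near `π/8` and of its mirror image. There `cos 3t > 0`, and a crude bound on `∫ sin (3t) cos t dt`
shows `corrCoeff ≥ 0`, which keeps `ψ` positive.
Finally `φ ≢ 0`, for otherwise `ψ' = -(φ'' + 9φ)` would vanish on `(0, π)` while
`ψ 0 = 0` and `ψ (π/2) = 1`.
-/

open Real Set Filter Topology intervalIntegral
open scoped ContDiff

theorem ContDiff.div_of_eventuallyEq_zero {𝕜 E : Type*} [NontriviallyNormedField 𝕜]
    [NormedAddCommGroup E] [NormedSpace 𝕜 E] {n : WithTop ℕ∞} {g h : E → 𝕜}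
    (hg : ContDiff 𝕜 n g) (hh : ContDiff 𝕜 n h) (H : ∀ x, h x ≠ 0 ∨ g =ᶠ[𝓝 x] 0) :
    ContDiff 𝕜 n fun x => g x / h x := by
  refine contDiff_iff_contDiffAt.2 fun x => ?_
  rcases H x with hx | hx
  · exact hg.contDiffAt.div hh.contDiffAt hx
  · exact contDiffAt_const.congr_of_eventuallyEq
      (hx.mono fun y hy => show g y / h y = 0 by simp [hy])

theorem ContDiff.intervalIntegral_primitive {g : ℝ → ℝ} (hg : ContDiff ℝ ∞ g) (a : ℝ) :
    ContDiff ℝ ∞ fun x => ∫ t in a..x, g t := by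
  refine contDiff_infty_iff_deriv.2 ⟨fun x => ?_, ?_⟩
  · exact (hg.continuous.integral_hasStrictDerivAt a x).hasDerivAt.differentiableAt
  · rwa [funext (hg.continuous.deriv_integral g a)]

theorem hasDerivAt_sin_mul (k x : ℝ) : HasDerivAt (fun x => sin (k * x)) (k * cos (k * x)) x := by
  simpa [mul_comm] using ((hasDerivAt_id x).const_mul k).sin

theorem hasDerivAt_cos_mul (k x : ℝ) :
    HasDerivAt (fun x => cos (k * x)) (-(k * sin (k * x))) x := by
  simpa [mul_comm] using ((hasDerivAt_id x).const_mul k).cos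

theorem integral_sin_mul_deriv {g : ℝ → ℝ} (hg : ContDiff ℝ 1 g) (k b : ℝ) :
    ∫ t in 0..b, sin (k * t) * deriv g t =
      sin (k * b) * g b - k * ∫ t in 0..b, cos (k * t) * g t := by
  rw [integral_mul_deriv_eq_deriv_mul (fun t _ => hasDerivAt_sin_mul k t)
    (fun t _ => (hg.differentiable one_ne_zero t).hasDerivAt)
    ((by fun_prop : Continuous fun t => k * cos (k * t)).intervalIntegrable _ _)
    (hg.continuous_deriv_one.intervalIntegrable _ _), ← integral_const_mul]
  simp [mul_assoc]

theorem deriv_deriv_add_eventuallyEq_zero_of_eventuallyEq_sin {g : ℝ → ℝ} {x : ℝ}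
    (h : g =ᶠ[𝓝 x] sin) : (fun y => deriv (deriv g) y + g y) =ᶠ[𝓝 x] 0 :=
  h.eventuallyEq_nhds.mono fun y hy => by simp [hy.deriv.deriv_eq, hy.eq_of_nhds]

theorem ContDiffBump.eq_zero_of_le_sub {c : ℝ} (f : ContDiffBump c) {x : ℝ}
    (hx : x ≤ c - f.rOut) : f x = 0 :=
  f.zero_of_le_dist <| by rw [Real.dist_eq, abs_sub_comm]; exact le_abs.2 (Or.inl (by linarith))

theorem ContDiffBump.eq_zero_of_add_le {c : ℝ} (f : ContDiffBump c) {x : ℝ}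
    (hx : c + f.rOut ≤ x) : f x = 0 :=
  f.zero_of_le_dist <| by rw [Real.dist_eq]; exact le_abs.2 (Or.inl (by linarith))

theorem ContDiffBump.eq_one_of_mem_Icc {c : ℝ} (f : ContDiffBump c) {x : ℝ}
    (hx : x ∈ Icc (c - f.rIn) (c + f.rIn)) : f x = 1 :=
  f.one_of_mem_closedBall (by rwa [Real.closedBall_eq_Icc])

noncomputable section VariationOfConstants

/-- `(1/k) ∫_a^x sin (k (x - t)) f t dt`, the solution of `u'' + k² u = f` with `u a = u' a = 0`,
with `sin (k (x - t))` expanded so that `x` only occurs outside the integrals. -/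
def duhamel (k a : ℝ) (f : ℝ → ℝ) (x : ℝ) : ℝ :=
  (sin (k * x) * (∫ t in a..x, cos (k * t) * f t) -
    cos (k * x) * ∫ t in a..x, sin (k * t) * f t) / k

variable {k a : ℝ} {f : ℝ → ℝ}

theorem hasDerivAt_duhamel (hk : k ≠ 0) (hf : Continuous f) (x : ℝ) :
    HasDerivAt (duhamel k a f)
      (cos (k * x) * (∫ t in a..x, cos (k * t) * f t) +
        sin (k * x) * ∫ t in a..x, sin (k * t) * f t) x := by
  have hC := (show Continuous fun t => cos (k * t) * f t by fun_prop).integral_hasStrictDerivAt a x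
  have hS := (show Continuous fun t => sin (k * t) * f t by fun_prop).integral_hasStrictDerivAt a x
  refine ((((hasDerivAt_sin_mul k x).fun_mul hC.hasDerivAt).fun_sub
    ((hasDerivAt_cos_mul k x).fun_mul hS.hasDerivAt)).div_const k).congr_deriv ?_
  field_simp
  ring

theorem deriv_deriv_duhamel (hk : k ≠ 0) (hf : Continuous f) (x : ℝ) :
    deriv (deriv (duhamel k a f)) x + k ^ 2 * duhamel k a f x = f x := by
  have hC := (show Continuous fun t => cos (k * t) * f t by fun_prop).integral_hasStrictDerivAt a x
  have hS := (show Continuous fun t => sin (k * t) * f t by fun_prop).integral_hasStrictDerivAt a x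
  have h2 := ((hasDerivAt_cos_mul k x).fun_mul hC.hasDerivAt).fun_add
    ((hasDerivAt_sin_mul k x).fun_mul hS.hasDerivAt)
  rw [funext fun y => (hasDerivAt_duhamel (a := a) hk hf y).deriv, h2.deriv, duhamel]
  field_simp
  linear_combination f x * sin_sq_add_cos_sq (k * x)

theorem contDiff_duhamel (hf : ContDiff ℝ ∞ f) : ContDiff ℝ ∞ (duhamel k a f) := by
  have hC := ContDiff.intervalIntegral_primitive (g := fun t => cos (k * t) * f t)
    (by fun_prop) a
  have hS := ContDiff.intervalIntegral_primitive (g := fun t => sin (k * t) * f t)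
    (by fun_prop) a
  unfold duhamel
  fun_prop

theorem duhamel_eq_zero_of_forall_eq_zero {x : ℝ} (h : ∀ t ∈ uIcc a x, f t = 0) :
    duhamel k a f x = 0 := by
  have hC : ∫ t in a..x, cos (k * t) * f t = 0 := by
    rw [integral_congr (g := fun _ => 0) fun t ht => by simp [h t ht]]; simp
  have hS : ∫ t in a..x, sin (k * t) * f t = 0 := by
    rw [integral_congr (g := fun _ => 0) fun t ht => by simp [h t ht]]; simp
  simp [duhamel, hC, hS]

theorem duhamel_eq_zero_of_sin_eq_zero {x : ℝ} (hx : sin (k * x) = 0)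
    (h : ∫ t in a..x, sin (k * t) * f t = 0) : duhamel k a f x = 0 := by
  simp [duhamel, hx, h]

theorem eq_zero_of_duhamel_eq_zero (hk : k ≠ 0) (hf : Continuous f) {s : Set ℝ} (hs : IsOpen s)
    (h : ∀ x ∈ s, duhamel k a f x = 0) : ∀ x ∈ s, f x = 0 := by
  intro x hx
  have hzero : duhamel k a f =ᶠ[𝓝 x] 0 := eventuallyEq_of_mem (hs.mem_nhds hx) h
  rw [← deriv_deriv_duhamel hk hf x, hzero.deriv.deriv_eq, h x hx]
  simp

end VariationOfConstants

namespace NonControllable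

local notation "α" => 7 * π / 15

noncomputable section

def plateau : ContDiffBump (π / 2) := ⟨π / 10, π / 6, by positivity, by linarith [pi_pos]⟩

def corrector : ContDiffBump (π / 8) := ⟨π / 48, π / 24, by positivity, by linarith [pi_pos]⟩

def basePsi (x : ℝ) : ℝ := (1 - plateau x) * sin x + plateau x

def cosMoment (g : ℝ → ℝ) : ℝ := ∫ t in 0..α, cos (3 * t) * g t

def corrCoeff : ℝ := (sin (3 * α) - 3 * cosMoment basePsi) / (3 * cosMoment corrector)

def psi (x : ℝ) : ℝ := basePsi x + corrCoeff * (corrector x + corrector (π - x))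

def phi : ℝ → ℝ := duhamel 3 α (-deriv psi)

def potential (x : ℝ) : ℝ := -8 - (deriv (deriv psi) x + psi x) / psi x

end

theorem plateau_eq_zero {x : ℝ} (hx : x ≤ π / 3) : plateau x = 0 :=
  plateau.eq_zero_of_le_sub (by change x ≤ π / 2 - π / 6; linarith)

theorem plateau_eq_one {x : ℝ} (hx : x ∈ Icc (2 * π / 5) (3 * π / 5)) : plateau x = 1 :=
  plateau.eq_one_of_mem_Icc <| by
    change x ∈ Icc (π / 2 - π / 10) (π / 2 + π / 10)
    constructor <;> linarith [hx.1, hx.2]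

theorem plateau_pi_sub (x : ℝ) : plateau (π - x) = plateau x := by
  simpa [show π / 2 - (x - π / 2) = π - x by ring] using plateau.sub (x - π / 2)

theorem corrector_eq_zero_of_le {x : ℝ} (hx : x ≤ π / 12) : corrector x = 0 :=
  corrector.eq_zero_of_le_sub (by change x ≤ π / 8 - π / 24; linarith)

theorem corrector_eq_zero_of_ge {x : ℝ} (hx : π / 6 ≤ x) : corrector x = 0 :=
  corrector.eq_zero_of_add_le (by change π / 8 + π / 24 ≤ x; linarith)

theorem contDiff_basePsi : ContDiff ℝ ∞ basePsi := by
  have := plateau.contDiff (n := ⊤)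
  unfold basePsi
  fun_prop

theorem basePsi_of_le {x : ℝ} (hx : x ≤ π / 3) : basePsi x = sin x := by
  simp [basePsi, plateau_eq_zero hx]

theorem basePsi_eq_one {x : ℝ} (hx : x ∈ Icc (2 * π / 5) (3 * π / 5)) : basePsi x = 1 := by
  simp [basePsi, plateau_eq_one hx]

theorem sin_le_basePsi (x : ℝ) : sin x ≤ basePsi x := by
  have : basePsi x - sin x = plateau x * (1 - sin x) := by rw [basePsi]; ring
  nlinarith [plateau.nonneg' x, sin_le_one x]

theorem integral_sin_three_mul_mul_cos (b : ℝ) :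
    ∫ t in 0..b, sin (3 * t) * cos t = 3 / 8 - cos (4 * b) / 8 - cos (2 * b) / 4 := by
  have hderiv (t : ℝ) : HasDerivAt (fun t => -cos (4 * t) / 8 - cos (2 * t) / 4)
      (sin (3 * t) * cos t) t := by
    refine (((hasDerivAt_cos_mul 4 t).neg.div_const 8).sub
      ((hasDerivAt_cos_mul 2 t).div_const 4)).congr_deriv ?_
    rw [show 4 * t = 3 * t + t by ring, show 2 * t = 3 * t - t by ring, sin_add, sin_sub]
    ring
  rw [integral_eq_sub_of_hasDerivAt (fun t _ => hderiv t)
    ((by fun_prop : Continuous fun t => sin (3 * t) * cos t).intervalIntegrable _ _)]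
  simp
  ring

theorem three_quarters_le_sin : 3 / 4 ≤ sin α := by
  have h : sin (π / 3) ≤ sin α :=
    sin_le_sin_of_le_of_le_pi_div_two (by linarith [pi_pos]) (by linarith [pi_pos])
      (by linarith [pi_pos])
  have : (3 / 2 : ℝ) ≤ √3 := Real.le_sqrt_of_sq_le (by norm_num)
  rw [sin_pi_div_three] at h
  linarith

theorem cosMoment_basePsi_le : 3 * cosMoment basePsi ≤ sin (3 * α) := by
  have hπ := pi_pos
  have hmono : cosMoment basePsi ≤ cosMoment sin := by
    refine integral_mono_on (by positivity) ?_ ?_ fun t ht => ?_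
    · exact ((by fun_prop : Continuous fun t => cos (3 * t)).mul
        contDiff_basePsi.continuous).intervalIntegrable _ _
    · exact (by fun_prop : Continuous fun t => cos (3 * t) * sin t).intervalIntegrable _ _
    rcases le_or_gt t (π / 3) with h | h
    · rw [basePsi_of_le h]
    · exact mul_le_mul_of_nonpos_left (sin_le_basePsi t)
        (cos_nonpos_of_pi_div_two_le_of_le (by linarith) (by linarith [ht.2]))
  have hparts := integral_sin_mul_deriv contDiff_sin 3 α
  rw [Real.deriv_sin, integral_sin_three_mul_mul_cos] at hparts
  have hcos2 : cos (2 * α) ≤ 0 :=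
    cos_nonpos_of_pi_div_two_le_of_le (by linarith) (by linarith)
  have := three_quarters_le_sin
  have := mul_nonneg (neg_le_iff_add_nonneg.1 (neg_one_le_sin (3 * α)))
    (sub_nonneg.2 (sin_le_one α))
  unfold cosMoment at hmono ⊢
  nlinarith [cos_le_one (4 * α)]

theorem cosMoment_corrector_pos : 0 < cosMoment corrector := by
  have hπ := pi_pos
  refine integral_pos (by positivity) ((by fun_prop : Continuous fun t => cos (3 * t)).mul
    corrector.continuous).continuousOn (fun t ht => ?_) ⟨π / 8, ⟨by positivity, by linarith⟩, ?_⟩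
  · rcases le_or_gt t (π / 6) with h | h
    · exact mul_nonneg (cos_nonneg_of_mem_Icc ⟨by linarith [ht.1], by linarith⟩) corrector.nonneg
    · simp [corrector_eq_zero_of_ge h.le]
  · have : corrector.rIn = π / 48 := rfl
    rw [corrector.eq_one_of_mem_Icc (by constructor <;> linarith)]
    simpa using cos_pos_of_mem_Ioo ⟨by linarith, by linarith⟩

theorem corrCoeff_nonneg : 0 ≤ corrCoeff :=
  div_nonneg (by linarith [cosMoment_basePsi_le]) (by linarith [cosMoment_corrector_pos])

theorem contDiff_psi : ContDiff ℝ ∞ psi := by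
  have := corrector.contDiff (n := ⊤)
  have := contDiff_basePsi
  unfold psi
  fun_prop

theorem psi_pi_sub (x : ℝ) : psi (π - x) = psi x := by
  simp only [psi, basePsi, plateau_pi_sub, sin_pi_sub, sub_sub_cancel]
  ring

theorem psi_of_le {x : ℝ} (hx : x ≤ π / 12) : psi x = sin x := by
  have hπ := pi_pos
  simp [psi, basePsi_of_le (show x ≤ π / 3 by linarith), corrector_eq_zero_of_le hx,
    corrector_eq_zero_of_ge (show π / 6 ≤ π - x by linarith)]

theorem psi_of_ge {x : ℝ} (hx : 11 * π / 12 ≤ x) : psi x = sin x := by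
  rw [← psi_pi_sub, psi_of_le (by linarith), sin_pi_sub]

theorem psi_eq_one {x : ℝ} (hx : x ∈ Icc (2 * π / 5) (3 * π / 5)) : psi x = 1 := by
  have hπ := pi_pos
  simp [psi, basePsi_eq_one hx, corrector_eq_zero_of_ge (show π / 6 ≤ x by linarith [hx.1]),
    corrector_eq_zero_of_ge (show π / 6 ≤ π - x by linarith [hx.2])]

theorem psi_zero : psi 0 = 0 := by
  rw [psi_of_le (by positivity), sin_zero]

theorem psi_pi : psi π = 0 := by
  rw [psi_of_ge (by linarith [pi_pos]), sin_pi]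

theorem psi_pi_div_two : psi (π / 2) = 1 :=
  psi_eq_one ⟨by linarith [pi_pos], by linarith [pi_pos]⟩

theorem sin_le_psi (x : ℝ) : sin x ≤ psi x := by
  have := mul_nonneg corrCoeff_nonneg
    (add_nonneg (corrector.nonneg' x) (corrector.nonneg' (π - x)))
  rw [psi]
  linarith [sin_le_basePsi x]

theorem deriv_psi_eq_zero {x : ℝ} (hx : x ∈ Ioo (2 * π / 5) (3 * π / 5)) : deriv psi x = 0 := by
  rw [(eventuallyEq_of_mem (isOpen_Ioo.mem_nhds hx)
    fun y hy => psi_eq_one (Ioo_subset_Icc_self hy) : psi =ᶠ[𝓝 x] fun _ => 1).deriv_eq]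
  simp

theorem deriv_psi_pi_sub (x : ℝ) : deriv psi (π - x) = -deriv psi x := by
  have h := deriv_comp_const_sub psi π x
  rw [funext psi_pi_sub] at h
  linarith

theorem continuous_sin_mul_deriv_psi : Continuous fun t => sin (3 * t) * deriv psi t :=
  (by fun_prop : Continuous fun t => sin (3 * t)).mul (contDiff_psi.continuous_deriv (by simp))

theorem integral_sin_mul_deriv_psi : ∫ t in 0..α, sin (3 * t) * deriv psi t = 0 := by
  have hπ := pi_pos
  have hcos (g : ℝ → ℝ) (hg : Continuous g) : IntervalIntegrable (fun t => cos (3 * t) * g t)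
      MeasureTheory.volume 0 α :=
    ((by fun_prop : Continuous fun t => cos (3 * t)).mul hg).intervalIntegrable _ _
  have hmoment : cosMoment psi = cosMoment basePsi + corrCoeff * cosMoment corrector := by
    unfold cosMoment
    rw [← integral_const_mul, ← integral_add (hcos _ contDiff_basePsi.continuous)
      ((hcos _ corrector.continuous).const_mul _)]
    refine integral_congr fun t ht => ?_
    rw [uIcc_of_le (by positivity)] at ht
    simp only [psi, corrector_eq_zero_of_ge (show π / 6 ≤ π - t by linarith [ht.2])]
    ring
  rw [integral_sin_mul_deriv (contDiff_psi.of_le (by simp)), psi_eq_one ⟨by linarith, by linarith⟩]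
  change sin (3 * α) * 1 - 3 * cosMoment psi = 0
  rw [hmoment, corrCoeff]
  field_simp [cosMoment_corrector_pos.ne']
  ring

theorem integral_sin_mul_deriv_psi_pi : ∫ t in α..π, sin (3 * t) * deriv psi t = 0 := by
  have hπ := pi_pos
  have hmiddle : ∫ t in α..(π - α), sin (3 * t) * deriv psi t = 0 := by
    rw [integral_congr (g := fun _ => 0) fun t ht => ?_]
    · simp
    rw [uIcc_of_le (by linarith)] at ht
    simp [deriv_psi_eq_zero (x := t) ⟨by linarith [ht.1], by linarith [ht.2]⟩]
  have hreflect : ∫ t in (π - α)..π, sin (3 * t) * deriv psi t =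
      -∫ t in 0..α, sin (3 * t) * deriv psi t := by
    have h := integral_comp_sub_left (fun t => sin (3 * t) * deriv psi t) π (a := 0) (b := α)
    rw [sub_zero] at h
    rw [← h, ← integral_neg]
    refine integral_congr fun t _ => ?_
    rw [deriv_psi_pi_sub, show 3 * (π - t) = π - 3 * t + 2 * π by ring, sin_add_two_pi,
      sin_pi_sub]
    ring
  have hint (b c : ℝ) :=
    continuous_sin_mul_deriv_psi.intervalIntegrable (μ := MeasureTheory.volume) b c
  rw [← integral_add_adjacent_intervals (b := π - α) (hint _ _) (hint _ _), hmiddle, hreflect,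
    integral_sin_mul_deriv_psi]
  simp

theorem contDiff_neg_deriv_psi : ContDiff ℝ ∞ (-deriv psi) :=
  (contDiff_infty_iff_deriv.1 contDiff_psi).2.neg

theorem contDiff_phi : ContDiff ℝ ∞ phi :=
  contDiff_duhamel contDiff_neg_deriv_psi

theorem phi_equation (x : ℝ) : -deriv (deriv phi) x - deriv psi x = 9 * phi x := by
  have := deriv_deriv_duhamel (a := α) three_ne_zero contDiff_neg_deriv_psi.continuous x
  simp only [Pi.neg_apply] at this
  unfold phi
  linarith

theorem phi_zero : phi 0 = 0 := by
  refine duhamel_eq_zero_of_sin_eq_zero (by simp) ?_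
  simp only [Pi.neg_apply, mul_neg, integral_neg, neg_eq_zero]
  rw [integral_symm, integral_sin_mul_deriv_psi, neg_zero]

theorem phi_pi : phi π = 0 := by
  refine duhamel_eq_zero_of_sin_eq_zero (by simpa using sin_nat_mul_pi 3) ?_
  simp only [Pi.neg_apply, mul_neg, integral_neg, neg_eq_zero]
  exact integral_sin_mul_deriv_psi_pi

theorem phi_eq_zero {x : ℝ} (hx : x ∈ Icc α (8 * π / 15)) : phi x = 0 := by
  have hπ := pi_pos
  refine duhamel_eq_zero_of_forall_eq_zero fun t ht => ?_
  rw [uIcc_of_le hx.1] at ht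
  simp [deriv_psi_eq_zero (x := t) ⟨by linarith [ht.1], by linarith [ht.2, hx.2]⟩]

theorem exists_phi_ne_zero : ∃ x ∈ Icc 0 π, phi x ≠ 0 := by
  have hπ := pi_pos
  by_contra! h
  have hψ' := eq_zero_of_duhamel_eq_zero three_ne_zero contDiff_neg_deriv_psi.continuous
    isOpen_Ioo fun y hy => h y (Ioo_subset_Icc_self hy)
  obtain ⟨c, hc, hslope⟩ := exists_deriv_eq_slope psi (show 0 < π / 2 by positivity)
    contDiff_psi.continuous.continuousOn (contDiff_psi.differentiable (by simp)).differentiableOn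
  have hc' : -deriv psi c = 0 := hψ' c ⟨hc.1, by linarith [hc.2]⟩
  rw [neg_eq_zero.1 hc', psi_pi_div_two, psi_zero] at hslope
  norm_num at hslope
  exact (div_pos two_pos hπ).ne hslope

theorem psi_ne_zero_or_eventuallyEq (x : ℝ) :
    psi x ≠ 0 ∨ (fun y => deriv (deriv psi) y + psi y) =ᶠ[𝓝 x] 0 := by
  have hπ := pi_pos
  rcases lt_or_ge x (π / 12) with hx | hx
  · exact .inr <| deriv_deriv_add_eventuallyEq_zero_of_eventuallyEq_sin <|
      eventuallyEq_of_mem (Iio_mem_nhds hx) fun y hy => psi_of_le (le_of_lt hy)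
  rcases lt_or_ge (11 * π / 12) x with hx' | hx'
  · exact .inr <| deriv_deriv_add_eventuallyEq_zero_of_eventuallyEq_sin <|
      eventuallyEq_of_mem (Ioi_mem_nhds hx') fun y hy => psi_of_ge (le_of_lt hy)
  exact Or.inl ((sin_pos_of_pos_of_lt_pi (by linarith) (by linarith)).trans_le (sin_le_psi x)).ne'

theorem contDiff_potential : ContDiff ℝ ∞ potential :=
  contDiff_const.sub <| ContDiff.div_of_eventuallyEq_zero
    ((contDiff_psi.iterate_deriv 2).add contDiff_psi) contDiff_psi
    psi_ne_zero_or_eventuallyEq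

theorem psi_equation (x : ℝ) : -deriv (deriv psi) x - potential x * psi x = 9 * psi x := by
  by_cases hx : psi x = 0
  · have h := ((psi_ne_zero_or_eventuallyEq x).resolve_left (not_not.2 hx)).eq_of_nhds
    simp only [Pi.zero_apply, hx] at h ⊢
    linarith
  · unfold potential
    field_simp
    ring

end NonControllable

theorem stmt_8 :
    ∃ φ ψ a : ℝ → ℝ,
      ContDiff ℝ (⊤ : ℕ∞) φ ∧ ContDiff ℝ (⊤ : ℕ∞) ψ ∧ ContDiff ℝ (⊤ : ℕ∞) a ∧
      (∀ x ∈ Set.Icc (0:ℝ) π, -(deriv (deriv φ) x) - deriv ψ x = 9 * φ x) ∧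
      (∀ x ∈ Set.Icc (0:ℝ) π, -(deriv (deriv ψ) x) - a x * ψ x = 9 * ψ x) ∧
      φ 0 = 0 ∧ φ π = 0 ∧ ψ 0 = 0 ∧ ψ π = 0 ∧
      (∀ x ∈ Set.Icc (7 * π / 15) (8 * π / 15), φ x = 0) ∧
      (∃ x ∈ Set.Icc (0:ℝ) π, ψ x ≠ 0) ∧ (∃ x ∈ Set.Icc (0:ℝ) π, φ x ≠ 0) := by
  open NonControllable in
  exact ⟨phi, psi, potential, contDiff_phi, contDiff_psi, contDiff_potential,
      fun x _ => phi_equation x, fun x _ => psi_equation x, phi_zero, phi_pi, psi_zero, psi_pi,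
      fun _ => phi_eq_zero,
      ⟨π / 2, ⟨by linarith [pi_pos], by linarith [pi_pos]⟩, by simp [psi_pi_div_two]⟩,
      exists_phi_ne_zero⟩
end

section
/- For every α, β with 0 < α < β < π there exist C^∞ functions φ, a : ℝ → ℝ such that φ(0) = φ(π) = 0, φ(x) > 0 for every x ∈ (0, π), φ(x) = 1 for every x ∈ [α, β], and −φ″(x) − a(x)·φ(x) = φ(x) for every x ∈ [0, π]. -/
open Real Set Filter Topology
open scoped ContDiff

/-!
Glue `sin` to the constant `1` by a smooth plateau function `χ` that equals `1` on `[α, β]` and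
whose support is a compact subset of `(0, π)`: `φ = sin + χ (1 - sin)`. Then `φ ≥ sin > 0` on
`(0, π)`, and `φ = sin` off `tsupport χ`, so `-φ'' - φ` vanishes there. Hence
`a = (-φ'' - φ) / φ` is smooth: near `tsupport χ` the denominator is positive, and off it `a` is
locally `0`.
-/

theorem ContDiff.div_of_ne_zero_or_eventuallyEq_zero {𝕜 E : Type*} [NontriviallyNormedField 𝕜]
    [NormedAddCommGroup E] [NormedSpace 𝕜 E] {n : WithTop ℕ∞} {f g : E → 𝕜}
    (hf : ContDiff 𝕜 n f) (hg : ContDiff 𝕜 n g) (h : ∀ x, g x ≠ 0 ∨ f =ᶠ[𝓝 x] 0) :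
    ContDiff 𝕜 n (f / g) := by
  refine contDiff_iff_contDiffAt.2 fun x => ?_
  rcases h x with hgx | hfx
  · exact hf.contDiffAt.div hg.contDiffAt hgx
  · refine contDiffAt_const (c := (0 : 𝕜)).congr_of_eventuallyEq ?_
    filter_upwards [hfx] with y hy
    simp [hy]

theorem exists_contDiff_plateau {a α β b : ℝ} (ha : a < α) (hαβ : α < β) (hb : β < b) :
    ∃ χ : ℝ → ℝ, ContDiff ℝ ∞ χ ∧ (∀ x, 0 ≤ χ x) ∧ EqOn χ 1 (Icc α β) ∧
      tsupport χ ⊆ Ioo a b := by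
  obtain ⟨ε, hε, hεa, hεb⟩ : ∃ ε > 0, ε < α - a ∧ ε < b - β :=
    ⟨min (α - a) (b - β) / 2, by positivity, by linarith [min_le_left (α - a) (b - β)],
      by linarith [min_le_right (α - a) (b - β)]⟩
  let χ : ContDiffBump ((α + β) / 2) := ⟨(β - α) / 2, (β - α) / 2 + ε, by linarith, by linarith⟩
  have hIn : χ.rIn = (β - α) / 2 := rfl
  have hOut : χ.rOut = (β - α) / 2 + ε := rfl
  refine ⟨χ, χ.contDiff, fun x => χ.nonneg, fun x hx => χ.one_of_mem_closedBall ?_, ?_⟩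
  · rw [closedBall_eq_Icc, hIn]
    constructor <;> linarith [hx.1, hx.2]
  · rw [χ.tsupport_eq, closedBall_eq_Icc, hOut]
    exact Icc_subset_Ioo (by linarith) (by linarith)

noncomputable def blendSinOne (χ : ℝ → ℝ) (x : ℝ) : ℝ := sin x + χ x * (1 - sin x)

section blendSinOne

variable {χ : ℝ → ℝ} {x : ℝ}

theorem contDiff_blendSinOne {n : WithTop ℕ∞} (hχ : ContDiff ℝ n χ) :
    ContDiff ℝ n (blendSinOne χ) :=
  contDiff_sin.add (hχ.mul (contDiff_const.sub contDiff_sin))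

theorem blendSinOne_eq_one (h : χ x = 1) : blendSinOne χ x = 1 := by
  simp [blendSinOne, h]

theorem blendSinOne_pos (hχ : 0 ≤ χ x) (hx : 0 < sin x) : 0 < blendSinOne χ x :=
  add_pos_of_pos_of_nonneg hx (mul_nonneg hχ (sub_nonneg.2 (sin_le_one x)))

theorem blendSinOne_eventuallyEq_sin (hx : x ∉ tsupport χ) : blendSinOne χ =ᶠ[𝓝 x] sin := by
  rw [notMem_tsupport_iff_eventuallyEq] at hx
  filter_upwards [hx] with y hy
  simp [blendSinOne, hy]

theorem blendSinOne_of_notMem_tsupport (hx : x ∉ tsupport χ) : blendSinOne χ x = sin x :=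
  (blendSinOne_eventuallyEq_sin hx).eq_of_nhds

theorem neg_deriv_deriv_blendSinOne_sub_eventuallyEq_zero (hx : x ∉ tsupport χ) :
    (fun y => -deriv (deriv (blendSinOne χ)) y - blendSinOne χ y) =ᶠ[𝓝 x] 0 := by
  filter_upwards [(isClosed_tsupport χ).isOpen_compl.mem_nhds hx] with y hy
  have h := blendSinOne_eventuallyEq_sin hy
  simp [h.deriv.deriv_eq, h.eq_of_nhds]

end blendSinOne

theorem stmt_9 (α β : ℝ) (hα : 0 < α) (hαβ : α < β) (hβ : β < π) :
    ∃ φ a : ℝ → ℝ,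
      ContDiff ℝ (⊤ : ℕ∞) φ ∧ ContDiff ℝ (⊤ : ℕ∞) a ∧
      φ 0 = 0 ∧ φ π = 0 ∧
      (∀ x ∈ Set.Ioo (0:ℝ) π, 0 < φ x) ∧
      (∀ x ∈ Set.Icc α β, φ x = 1) ∧
      (∀ x ∈ Set.Icc (0:ℝ) π, -(deriv (deriv φ) x) - a x * φ x = φ x) := by
  obtain ⟨χ, hχ, hχ_nonneg, hχ_one, hχ_supp⟩ := exists_contDiff_plateau hα hαβ hβ
  set φ := blendSinOne χ
  set N : ℝ → ℝ := fun y => -deriv (deriv φ) y - φ y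
  have hφ_pos : ∀ x ∈ Ioo 0 π, 0 < φ x := fun x hx =>
    blendSinOne_pos (hχ_nonneg x) (sin_pos_of_pos_of_lt_pi hx.1 hx.2)
  have hφ_sin : ∀ x ∉ Ioo 0 π, φ x = sin x := fun x hx =>
    blendSinOne_of_notMem_tsupport fun h => hx (hχ_supp h)
  have hN : ∀ x, φ x ≠ 0 ∨ N =ᶠ[𝓝 x] 0 := fun x => by
    by_cases hx : x ∈ tsupport χ
    · exact Or.inl (hφ_pos x (hχ_supp hx)).ne'
    · exact Or.inr (neg_deriv_deriv_blendSinOne_sub_eventuallyEq_zero hx)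
  have hφ_smooth : ContDiff ℝ ∞ φ := contDiff_blendSinOne hχ
  have hN_smooth : ContDiff ℝ ∞ N :=
    ((hφ_smooth.iterate_deriv 2).neg).sub hφ_smooth
  refine ⟨φ, N / φ, hφ_smooth, hN_smooth.div_of_ne_zero_or_eventuallyEq_zero hφ_smooth hN,
    by simp [hφ_sin 0], by simp [hφ_sin π], hφ_pos, fun x hx => blendSinOne_eq_one (hχ_one hx),
    fun x _ => ?_⟩
  have ha_mul : N x / φ x * φ x = N x :=
    div_mul_cancel_of_imp fun h0 => ((hN x).resolve_left (not_not.2 h0)).eq_of_nhds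
  simp only [Pi.div_apply, ha_mul, N]
  ring
end

section
/- Let N ≥ 1, let Ω ⊂ ℝ^N be a bounded open set, and let ω₁, ω₂ be open sets with the closure of ω₁ contained in ω₂ and the closure of ω₂ contained in Ω. Suppose φ₁ : ℝ^N → ℝ is a C^∞ function with φ₁(x) > 0 for every x ∈ Ω, φ₁(x) = 0 for every x in the boundary ∂Ω, and −Δφ₁(x) = λ₁·φ₁(x) for every x ∈ Ω, for some λ₁ ∈ ℝ. Then there exist C^∞ functions φ : ℝ^N → ℝ and a : Ω → ℝ such that: φ(x) > 0 for every x ∈ Ω; φ(x) = 0 for every x ∈ ∂Ω; φ(x) = 1 for every x ∈ ω₁ (in particular ∂_{x₁}φ = 0 on ω₁); −Δφ(x) − a(x)·φ(x) = φ(x) for every x ∈ Ω; and a(x) = λ₁ − 1 for every x ∈ Ω outside the closure of ω₂ (in particular a is bounded on Ω). -/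
open Real

/-- Partial derivative of `f : ℝ^N → ℝ` in the `i`-th coordinate direction. -/
noncomputable def pd {N : ℕ} (i : Fin N) (f : (Fin N → ℝ) → ℝ) (x : Fin N → ℝ) : ℝ :=
  deriv (fun s => f (Function.update x i s)) (x i)

/-- The Laplacian `Δf = Σᵢ ∂²f/∂xᵢ²` of `f : ℝ^N → ℝ`. -/
noncomputable def lap {N : ℕ} (f : (Fin N → ℝ) → ℝ) (x : Fin N → ℝ) : ℝ :=
  ∑ i, pd i (fun y => pd i f y) x

/-!
Glue the eigenfunction to the constant `1` by a smooth cutoff `θ` that is `1` on `closure ω₁` and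
vanishes off `ω₂`: `φ = θ + (1 - θ) φ₁` is a convex combination of two positive functions, hence
positive on `Ω`, and `a := (-Δφ - φ) / φ` is then smooth on `Ω`. Off `closure ω₂` the function `φ`
coincides with `φ₁` on an open set, so there `a = λ₁ - 1`; on the compact set `closure ω₂ ⊆ Ω` the
continuous function `a` is bounded.
-/

section PartialDerivatives

variable {N : ℕ} (i : Fin N)

theorem pd_congr_of_eventuallyEq {f g : (Fin N → ℝ) → ℝ} {x : Fin N → ℝ}
    (h : f =ᶠ[nhds x] g) : pd i f x = pd i g x := by
  have hline : Filter.Tendsto (Function.update x i) (nhds (x i)) (nhds x) := by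
    simpa using (hasDerivAt_update x i (x i)).continuousAt.tendsto
  exact Filter.EventuallyEq.deriv_eq (hline.eventually h)

theorem lap_congr_of_eventuallyEq {f g : (Fin N → ℝ) → ℝ} {x : Fin N → ℝ}
    (h : f =ᶠ[nhds x] g) : lap f x = lap g x :=
  Finset.sum_congr rfl fun i _ =>
    pd_congr_of_eventuallyEq i (h.eventually_nhds.mono fun _ => pd_congr_of_eventuallyEq i)

theorem pd_eq_fderiv {f : (Fin N → ℝ) → ℝ} {x : Fin N → ℝ} (hf : DifferentiableAt ℝ f x) :
    pd i f x = fderiv ℝ f x (Pi.single i 1) := by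
  rw [← Function.update_eq_self i x] at hf
  have h := (hf.hasFDerivAt.comp_hasDerivAt (x i) (hasDerivAt_update x i (x i))).deriv
  rwa [Function.update_eq_self] at h

theorem ContDiff.pd {n m : WithTop ℕ∞} {f : (Fin N → ℝ) → ℝ} (hf : ContDiff ℝ n f)
    (hmn : m + 1 ≤ n) : ContDiff ℝ m (_root_.pd i f) := by
  have hn : n ≠ 0 := by
    rintro rfl
    simp at hmn
  rw [show _root_.pd i f = fun x => fderiv ℝ f x (Pi.single i 1) from
    funext fun x => pd_eq_fderiv i (hf.differentiable hn x)]
  exact (hf.fderiv_right hmn).clm_apply contDiff_const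

end PartialDerivatives

theorem ContDiff.lap {N : ℕ} {n m : WithTop ℕ∞} {f : (Fin N → ℝ) → ℝ} (hf : ContDiff ℝ n f)
    (hmn : m + 2 ≤ n) : ContDiff ℝ m (_root_.lap f) := by
  rw [← one_add_one_eq_two, ← add_assoc] at hmn
  exact ContDiff.sum fun i _ => (hf.pd i hmn).pd i le_rfl

open scoped Manifold in
theorem exists_contDiff_zero_one_of_isClosed {E : Type*} [NormedAddCommGroup E]
    [NormedSpace ℝ E] [FiniteDimensional ℝ E] {s t : Set E} (hs : IsClosed s) (ht : IsClosed t)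
    (hd : Disjoint s t) :
    ∃ θ : E → ℝ, ContDiff ℝ (⊤ : ℕ∞) θ ∧ Set.EqOn θ 0 s ∧ Set.EqOn θ 1 t ∧
      ∀ x, θ x ∈ Set.Icc 0 1 := by
  obtain ⟨θ, hθs, hθt, hθ01⟩ := exists_contMDiffMap_zero_one_of_isClosed 𝓘(ℝ, E) hs ht hd
  exact ⟨θ, θ.contMDiff.contDiff, hθs, hθt, hθ01⟩

theorem exists_abs_le_of_continuousOn_of_eqOn_diff {X : Type*} [TopologicalSpace X]
    {K s : Set X} {g : X → ℝ} {c : ℝ} (hK : IsCompact K) (hg : ContinuousOn g K)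
    (hc : ∀ x ∈ s \ K, g x = c) : ∃ M, ∀ x ∈ s, |g x| ≤ M := by
  obtain ⟨M, hM⟩ := hK.exists_bound_of_continuousOn hg
  refine ⟨max M |c|, fun x hx => ?_⟩
  by_cases hxK : x ∈ K
  · exact (hM x hxK).trans (le_max_left _ _)
  · rw [hc x ⟨hx, hxK⟩]
    exact le_max_right _ _

section Glue

variable {E : Type*} (θ φ₁ : E → ℝ)

def glue : E → ℝ := fun x => θ x + (1 - θ x) * φ₁ x

variable {θ φ₁} {x : E}

theorem glue_pos (hθ : θ x ∈ Set.Icc 0 1) (hφ₁ : 0 < φ₁ x) : 0 < glue θ φ₁ x := by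
  obtain ⟨h0, h1⟩ := hθ
  rcases h1.lt_or_eq with h1 | h1
  · have := mul_pos (sub_pos.mpr h1) hφ₁
    unfold glue
    linarith
  · simp [glue, h1]

theorem glue_of_eq_one (hθ : θ x = 1) : glue θ φ₁ x = 1 := by
  simp [glue, hθ]

theorem glue_of_eq_zero (hθ : θ x = 0) : glue θ φ₁ x = φ₁ x := by
  simp [glue, hθ]

theorem ContDiff.glue [NormedAddCommGroup E] [NormedSpace ℝ E] {n : WithTop ℕ∞}
    (hθ : ContDiff ℝ n θ) (hφ₁ : ContDiff ℝ n φ₁) : ContDiff ℝ n (_root_.glue θ φ₁) :=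
  hθ.add ((contDiff_const.sub hθ).mul hφ₁)

end Glue

section Potential

variable {N : ℕ} {φ : (Fin N → ℝ) → ℝ} {x : Fin N → ℝ}

noncomputable def potential (φ : (Fin N → ℝ) → ℝ) (x : Fin N → ℝ) : ℝ :=
  (-lap φ x - φ x) / φ x

theorem neg_lap_sub_potential_mul (hφ : φ x ≠ 0) : -lap φ x - potential φ x * φ x = φ x := by
  unfold potential
  field_simp
  ring

theorem potential_eq_of_eventuallyEq_eigen {φ₁ : (Fin N → ℝ) → ℝ} {l : ℝ}
    (h : φ =ᶠ[nhds x] φ₁) (heig : -lap φ₁ x = l * φ₁ x) (hφ₁ : φ₁ x ≠ 0) :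
    potential φ x = l - 1 := by
  rw [potential, lap_congr_of_eventuallyEq h, h.self_of_nhds, heig]
  field_simp

theorem ContDiff.contDiffOn_potential {s : Set (Fin N → ℝ)} (hφ : ContDiff ℝ (⊤ : ℕ∞) φ)
    (hs : ∀ x ∈ s, φ x ≠ 0) : ContDiffOn ℝ (⊤ : ℕ∞) (potential φ) s :=
  (hφ.lap (by norm_cast)).neg.sub hφ |>.contDiffOn.div hφ.contDiffOn hs

end Potential

theorem stmt_11_general (N : ℕ) (hN : 0 < N)
    (Ω ω₁ ω₂ : Set (Fin N → ℝ))
    (hΩb : Bornology.IsBounded Ω)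
    (hω₁ : IsOpen ω₁) (hω₂ : IsOpen ω₂)
    (h12 : closure ω₁ ⊆ ω₂) (h2Ω : closure ω₂ ⊆ Ω)
    (φ₁ : (Fin N → ℝ) → ℝ) (hφ₁ : ContDiff ℝ (⊤ : ℕ∞) φ₁)
    (hφ₁pos : ∀ x ∈ Ω, 0 < φ₁ x) (hφ₁bd : ∀ x ∈ frontier Ω, φ₁ x = 0)
    (l₁ : ℝ) (heig : ∀ x ∈ Ω, -(lap φ₁ x) = l₁ * φ₁ x) :
    ∃ (φ a : (Fin N → ℝ) → ℝ),
      ContDiff ℝ (⊤ : ℕ∞) φ ∧ ContDiffOn ℝ (⊤ : ℕ∞) a Ω ∧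
      (∀ x ∈ Ω, 0 < φ x) ∧
      (∀ x ∈ frontier Ω, φ x = 0) ∧
      (∀ x ∈ ω₁, φ x = 1) ∧
      (∀ x ∈ ω₁, pd ⟨0, hN⟩ φ x = 0) ∧
      (∀ x ∈ Ω, -(lap φ x) - a x * φ x = φ x) ∧
      (∀ x ∈ Ω \ closure ω₂, a x = l₁ - 1) ∧
      (∃ M : ℝ, ∀ x ∈ Ω, |a x| ≤ M) := by
  obtain ⟨θ, hθs, hθ0, hθ1, hθ01⟩ := exists_contDiff_zero_one_of_isClosed
    hω₂.isClosed_compl isClosed_closure (Set.disjoint_compl_left_iff_subset.mpr h12)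
  set φ := glue θ φ₁
  have hφpos : ∀ x ∈ Ω, 0 < φ x := fun x hx => glue_pos (hθ01 x) (hφ₁pos x hx)
  have hφ_eq_φ₁ : ∀ x ∉ closure ω₂, φ =ᶠ[nhds x] φ₁ := fun x hx => by
    filter_upwards [isClosed_closure.isOpen_compl.mem_nhds hx] with y hy
    exact glue_of_eq_zero (hθ0 fun h => hy (subset_closure h))
  have hφ_eq_one : ∀ x ∈ ω₁, φ =ᶠ[nhds x] fun _ => 1 := fun x hx => by
    filter_upwards [hω₁.mem_nhds hx] with y hy
    exact glue_of_eq_one (hθ1 (subset_closure hy))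
  have ha : ContDiffOn ℝ (⊤ : ℕ∞) (potential φ) Ω :=
    (hθs.glue hφ₁).contDiffOn_potential fun x hx => (hφpos x hx).ne'
  have ha_out : ∀ x ∈ Ω \ closure ω₂, potential φ x = l₁ - 1 := fun x ⟨hxΩ, hx⟩ =>
    potential_eq_of_eventuallyEq_eigen (hφ_eq_φ₁ x hx) (heig x hxΩ) (hφ₁pos x hxΩ).ne'
  refine ⟨φ, potential φ, hθs.glue hφ₁, ha, hφpos, fun x hx => ?_,
    fun x hx => (hφ_eq_one x hx).self_of_nhds, fun x hx => ?_,
    fun x hx => neg_lap_sub_potential_mul (hφpos x hx).ne', ha_out, ?_⟩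
  · have hxΩ : x ∉ Ω := fun h => (hφ₁pos x h).ne' (hφ₁bd x hx)
    exact (hφ_eq_φ₁ x fun h => hxΩ (h2Ω h)).self_of_nhds.trans (hφ₁bd x hx)
  · rw [pd_congr_of_eventuallyEq _ (hφ_eq_one x hx)]
    simp [pd]
  · have hK : IsCompact (closure ω₂) :=
      Metric.isCompact_of_isClosed_isBounded isClosed_closure
        (hΩb.subset (subset_closure.trans h2Ω)).closure
    exact exists_abs_le_of_continuousOn_of_eqOn_diff hK (ha.continuousOn.mono h2Ω) ha_out

theorem stmt_11 (N : ℕ) (hN : 0 < N)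
    (Ω ω₁ ω₂ : Set (Fin N → ℝ))
    (hΩo : IsOpen Ω) (hΩb : Bornology.IsBounded Ω)
    (hω₁ : IsOpen ω₁) (hω₂ : IsOpen ω₂)
    (h12 : closure ω₁ ⊆ ω₂) (h2Ω : closure ω₂ ⊆ Ω)
    (φ₁ : (Fin N → ℝ) → ℝ) (hφ₁ : ContDiff ℝ (⊤ : ℕ∞) φ₁)
    (hφ₁pos : ∀ x ∈ Ω, 0 < φ₁ x) (hφ₁bd : ∀ x ∈ frontier Ω, φ₁ x = 0)
    (l₁ : ℝ) (heig : ∀ x ∈ Ω, -(lap φ₁ x) = l₁ * φ₁ x) :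
    ∃ (φ a : (Fin N → ℝ) → ℝ),
      ContDiff ℝ (⊤ : ℕ∞) φ ∧ ContDiffOn ℝ (⊤ : ℕ∞) a Ω ∧
      (∀ x ∈ Ω, 0 < φ x) ∧
      (∀ x ∈ frontier Ω, φ x = 0) ∧
      (∀ x ∈ ω₁, φ x = 1) ∧
      (∀ x ∈ ω₁, pd ⟨0, hN⟩ φ x = 0) ∧
      (∀ x ∈ Ω, -(lap φ x) - a x * φ x = φ x) ∧
      (∀ x ∈ Ω \ closure ω₂, a x = l₁ - 1) ∧
      (∃ M : ℝ, ∀ x ∈ Ω, |a x| ≤ M) :=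
  stmt_11_general N hN Ω ω₁ ω₂ hΩb hω₁ hω₂ h12 h2Ω φ₁ hφ₁ hφ₁pos hφ₁bd l₁ heig
end

section
/- Let n ≥ 2, let I ⊂ ℝ be an open interval, let U ⊂ ℝ^{n−1} be a nonempty open set, and set ω̃ := I × U ⊂ ℝⁿ with points written x = (x₁, x′). Let a₀, a₁, a₂ : ω̃ → ℝ be C² functions with a₁(x) ≠ 0 and ∂_{x₁}(a₂/a₁)(x) ≠ 0 for every x ∈ ω̃. If ∂_{x₁}( ∂_{x₁}(a₀/a₁) / ∂_{x₁}(a₂/a₁) )(x) = 0 for every x ∈ ω̃, then there exist continuous functions λ₁, λ₂ : U → ℝ such that a₀(x₁, x′) = λ₁(x′)·a₁(x₁, x′) + λ₂(x′)·a₂(x₁, x′) for every (x₁, x′) ∈ ω̃. -/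
/-!
With `f₀ = a₀ / a₁` and `f₂ = a₂ / a₁`, the hypothesis says that the C¹ quotient
`∂₁f₀ / ∂₁f₂` is constant along each segment `I × {x'}`; calling this constant `λ₂(x')`,
`∂₁(f₀ - λ₂ f₂) = 0`, so `f₀ - λ₂ f₂` is in turn some `λ₁(x')`. Both are evaluations of
continuous functions on the slice `{t₀} × U`, hence continuous.
-/

open Real

/-- Partial derivative in the first variable `x₁` of a function on `ℝ × ℝ^{n-1}`. -/
noncomputable def d1 {m : ℕ} (f : ℝ × (Fin m → ℝ) → ℝ) : ℝ × (Fin m → ℝ) → ℝ :=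
  fun p => deriv (fun s => f (s, p.2)) p.1

lemma ContDiffOn.differentiableAt_comp_prodMk_snd {E F : Type*} [NormedAddCommGroup E]
    [NormedSpace ℝ E] [NormedAddCommGroup F] [NormedSpace ℝ F] {f : ℝ × E → F} {Ω : Set (ℝ × E)}
    {n : WithTop ℕ∞} (hf : ContDiffOn ℝ n f Ω) (hΩ : IsOpen Ω) (hn : n ≠ 0) {p : ℝ × E}
    (hp : p ∈ Ω) : DifferentiableAt ℝ (fun s => f (s, p.2)) p.1 :=
  ((hf.contDiffAt (hΩ.mem_nhds hp)).differentiableAt hn).comp p.1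
    (differentiableAt_id.prodMk (differentiableAt_const p.2))

section PartialDerivative

variable {m : ℕ} {f g : ℝ × (Fin m → ℝ) → ℝ}

lemma d1_eq_fderiv {p : ℝ × (Fin m → ℝ)} (hf : DifferentiableAt ℝ f p) :
    d1 f p = fderiv ℝ f p (1, 0) :=
  (hf.hasFDerivAt.comp_hasDerivAt p.1
    ((hasDerivAt_id p.1).prodMk (hasDerivAt_const p.1 p.2))).deriv

lemma ContDiffOn.contDiffOn_d1 {Ω : Set (ℝ × (Fin m → ℝ))} (hΩ : IsOpen Ω) {k n : WithTop ℕ∞}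
    (hf : ContDiffOn ℝ n f Ω) (hkn : k + 1 ≤ n) : ContDiffOn ℝ k (d1 f) Ω := by
  have hn : n ≠ 0 := by
    rintro rfl
    simp at hkn
  refine ((hf.fderiv_of_isOpen hΩ hkn).clm_apply
    (contDiffOn_const (c := ((1 : ℝ), (0 : Fin m → ℝ))))).congr fun p hp => ?_
  exact d1_eq_fderiv ((hf.contDiffAt (hΩ.mem_nhds hp)).differentiableAt hn)

lemma d1_sub_mul {c : (Fin m → ℝ) → ℝ} {p : ℝ × (Fin m → ℝ)}
    (hf : DifferentiableAt ℝ (fun s => f (s, p.2)) p.1)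
    (hg : DifferentiableAt ℝ (fun s => g (s, p.2)) p.1) :
    d1 (fun q => f q - c q.2 * g q) p = d1 f p - c p.2 * d1 g p :=
  (hf.hasDerivAt.sub (hg.hasDerivAt.const_mul (c p.2))).deriv

variable {I : Set ℝ} {U : Set (Fin m → ℝ)} {t₀ : ℝ}

lemma eq_slice_of_d1_eq_zero (hI : IsOpen I) (hIc : I.OrdConnected)
    (hf : ∀ p ∈ I ×ˢ U, DifferentiableAt ℝ (fun s => f (s, p.2)) p.1)
    (h0 : ∀ p ∈ I ×ˢ U, d1 f p = 0) (ht₀ : t₀ ∈ I) {p : ℝ × (Fin m → ℝ)} (hp : p ∈ I ×ˢ U) :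
    f p = f (t₀, p.2) :=
  hI.is_const_of_deriv_eq_zero (f := fun s => f (s, p.2)) hIc.isPreconnected
    (fun s hs => (hf (s, p.2) ⟨hs, hp.2⟩).differentiableWithinAt)
    (fun s hs => h0 (s, p.2) ⟨hs, hp.2⟩) hp.1 ht₀

lemma sub_mul_eq_slice_of_d1_eq_mul (hI : IsOpen I) (hIc : I.OrdConnected)
    {c : (Fin m → ℝ) → ℝ}
    (hf : ∀ p ∈ I ×ˢ U, DifferentiableAt ℝ (fun s => f (s, p.2)) p.1)
    (hg : ∀ p ∈ I ×ˢ U, DifferentiableAt ℝ (fun s => g (s, p.2)) p.1)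
    (hfg : ∀ p ∈ I ×ˢ U, d1 f p = c p.2 * d1 g p) (ht₀ : t₀ ∈ I) {p : ℝ × (Fin m → ℝ)}
    (hp : p ∈ I ×ˢ U) :
    f p - c p.2 * g p = f (t₀, p.2) - c p.2 * g (t₀, p.2) :=
  eq_slice_of_d1_eq_zero (f := fun q => f q - c q.2 * g q) hI hIc
    (fun q hq => (hf q hq).fun_sub ((hg q hq).const_mul (c q.2)))
    (fun q hq => by rw [d1_sub_mul (hf q hq) (hg q hq), hfg q hq, sub_self]) ht₀ hp

end PartialDerivative

theorem stmt_18_general (n : ℕ)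
    (I : Set ℝ) (hIopen : IsOpen I) (hIinterval : I.OrdConnected)
    (U : Set (Fin (n - 1) → ℝ)) (hUopen : IsOpen U)
    (a₀ a₁ a₂ : ℝ × (Fin (n - 1) → ℝ) → ℝ)
    (ha₀ : ContDiffOn ℝ 2 a₀ (I ×ˢ U)) (ha₁ : ContDiffOn ℝ 2 a₁ (I ×ˢ U))
    (ha₂ : ContDiffOn ℝ 2 a₂ (I ×ˢ U))
    (ha₁ne : ∀ p ∈ I ×ˢ U, a₁ p ≠ 0)
    (ha₂ne : ∀ p ∈ I ×ˢ U, d1 (fun q => a₂ q / a₁ q) p ≠ 0)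
    (hder : ∀ p ∈ I ×ˢ U,
      d1 (fun q => d1 (fun r => a₀ r / a₁ r) q / d1 (fun r => a₂ r / a₁ r) q) p = 0) :
    ∃ lam₁ lam₂ : (Fin (n - 1) → ℝ) → ℝ,
      ContinuousOn lam₁ U ∧ ContinuousOn lam₂ U ∧
      ∀ p ∈ I ×ˢ U, a₀ p = lam₁ p.2 * a₁ p + lam₂ p.2 * a₂ p := by
  obtain rfl | ⟨t₀, ht₀⟩ := I.eq_empty_or_nonempty
  · exact ⟨0, 0, continuousOn_const, continuousOn_const, by simp⟩
  have hΩ : IsOpen (I ×ˢ U) := hIopen.prod hUopen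
  have hslice {φ : ℝ × (Fin (n - 1) → ℝ) → ℝ} (hφ : ContinuousOn φ (I ×ˢ U)) :
      ContinuousOn (fun x' => φ (t₀, x')) U :=
    hφ.comp (Continuous.prodMk_right t₀).continuousOn fun _ hx' => ⟨ht₀, hx'⟩
  set f₀ := fun q => a₀ q / a₁ q
  set f₂ := fun q => a₂ q / a₁ q
  have hf₀ : ContDiffOn ℝ 2 f₀ (I ×ˢ U) := ha₀.div ha₁ ha₁ne
  have hf₂ : ContDiffOn ℝ 2 f₂ (I ×ˢ U) := ha₂.div ha₁ ha₁ne
  set Q := fun q => d1 f₀ q / d1 f₂ q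
  have hQ : ContDiffOn ℝ 1 Q (I ×ˢ U) :=
    (hf₀.contDiffOn_d1 hΩ (by norm_num)).div (hf₂.contDiffOn_d1 hΩ (by norm_num)) ha₂ne
  set lam₂ := fun x' => Q (t₀, x')
  have hQ_eq : ∀ p ∈ I ×ˢ U, Q p = lam₂ p.2 := fun p hp =>
    eq_slice_of_d1_eq_zero hIopen hIinterval
      (fun q hq => hQ.differentiableAt_comp_prodMk_snd hΩ one_ne_zero hq) hder ht₀ hp
  set lam₁ := fun x' => f₀ (t₀, x') - lam₂ x' * f₂ (t₀, x')
  have hsplit : ∀ p ∈ I ×ˢ U, f₀ p - lam₂ p.2 * f₂ p = lam₁ p.2 := fun p hp =>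
    sub_mul_eq_slice_of_d1_eq_mul hIopen hIinterval
      (fun q hq => hf₀.differentiableAt_comp_prodMk_snd hΩ two_ne_zero hq)
      (fun q hq => hf₂.differentiableAt_comp_prodMk_snd hΩ two_ne_zero hq)
      (fun q hq => by rw [← hQ_eq q hq, div_mul_cancel₀ _ (ha₂ne q hq)]) ht₀ hp
  have hlam₂ : ContinuousOn lam₂ U := hslice hQ.continuousOn
  refine ⟨lam₁, lam₂,
    (hslice hf₀.continuousOn).sub (hlam₂.mul (hslice hf₂.continuousOn)), hlam₂, fun p hp => ?_⟩
  have h := hsplit p hp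
  have h₁ := ha₁ne p hp
  simp only [f₀, f₂] at h
  field_simp at h
  linarith

theorem stmt_18 (n : ℕ) (hn : 2 ≤ n)
    (I : Set ℝ) (hIopen : IsOpen I) (hIinterval : I.OrdConnected)
    (U : Set (Fin (n - 1) → ℝ)) (hUopen : IsOpen U) (hUne : U.Nonempty)
    (a₀ a₁ a₂ : ℝ × (Fin (n - 1) → ℝ) → ℝ)
    (ha₀ : ContDiffOn ℝ 2 a₀ (I ×ˢ U)) (ha₁ : ContDiffOn ℝ 2 a₁ (I ×ˢ U))
    (ha₂ : ContDiffOn ℝ 2 a₂ (I ×ˢ U))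
    (ha₁ne : ∀ p ∈ I ×ˢ U, a₁ p ≠ 0)
    (ha₂ne : ∀ p ∈ I ×ˢ U, d1 (fun q => a₂ q / a₁ q) p ≠ 0)
    (hder : ∀ p ∈ I ×ˢ U,
      d1 (fun q => d1 (fun r => a₀ r / a₁ r) q / d1 (fun r => a₂ r / a₁ r) q) p = 0) :
    ∃ lam₁ lam₂ : (Fin (n - 1) → ℝ) → ℝ,
      ContinuousOn lam₁ U ∧ ContinuousOn lam₂ U ∧
      ∀ p ∈ I ×ˢ U, a₀ p = lam₁ p.2 * a₁ p + lam₂ p.2 * a₂ p :=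
  stmt_18_general n I hIopen hIinterval U hUopen a₀ a₁ a₂ ha₀ ha₁ ha₂ ha₁ne ha₂ne hder
end
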